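/- arXiv:1303.5148 — 3 statements merged into one kernel-verified Lean document; each statement's English description precedes it below -/
import Mathlib

section
/- Let M, T ≥ 1, let q : {1,…,M} × {1,…,T} → ℝ with q(i,t) > 0, let κ > 0, and let λ : {1,…,T} → ℝ with λ(t) > 0 and Σ_t λ(t) = 1. Define r(i,t) = λ(t)·q(i,t)/Σ_{t'} λ(t')·q(i,t') and λ'(t) = (Σ_{i=1}^M r(i,t) + κ)/(M + T·κ). Then Σ_{i=1}^M log( Σ_t λ'(t)·q(i,t) ) + κ·Σ_t log λ'(t) ≥ Σ_{i=1}^M log( Σ_t λ(t)·q(i,t) ) + κ·Σ_t log λ(t). -/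
/-! By concavity of `log`, the log-likelihood gain of each observation `i` is at least
`∑ t, r i t * log (lam' t / lam t)`, because the ratio
`(∑ t, lam' t * q i t) / (∑ t, lam t * q i t)` is the `r i`-weighted mean of the ratios
`lam' t / lam t`. Adding the prior term, the total gain is at least
`∑ t, (∑ i, r i t + κ) * log (lam' t / lam t)`; the update makes these counts proportional to
`lam'`, so this is `(M + T κ) · KL(lam' ‖ lam) ≥ 0` by Gibbs' inequality. -/

open Finset Real

theorem Real.sum_mul_log_le_log_sum_mul {ι : Type*} {s : Finset ι} {w a : ι → ℝ}
    (hw : ∀ i ∈ s, 0 ≤ w i) (hw₁ : ∑ i ∈ s, w i = 1) (ha : ∀ i ∈ s, 0 < a i) :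
    ∑ i ∈ s, w i * log (a i) ≤ log (∑ i ∈ s, w i * a i) :=
  strictConcaveOn_log_Ioi.concaveOn.le_map_sum hw hw₁ ha

theorem Real.sum_mul_log_div_nonneg {ι : Type*} {s : Finset ι} {p q : ι → ℝ}
    (hp : ∀ i ∈ s, 0 < p i) (hq : ∀ i ∈ s, 0 < q i) (hp₁ : ∑ i ∈ s, p i = 1)
    (hq₁ : ∑ i ∈ s, q i ≤ 1) :
    0 ≤ ∑ i ∈ s, p i * log (p i / q i) := by
  have jensen := sum_mul_log_le_log_sum_mul (fun i hi => (hp i hi).le) hp₁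
    (fun i hi => div_pos (hq i hi) (hp i hi))
  have hpq : ∑ i ∈ s, p i * (q i / p i) = ∑ i ∈ s, q i :=
    sum_congr rfl fun i hi => mul_div_cancel₀ _ (hp i hi).ne'
  have hlog : log (∑ i ∈ s, q i) ≤ 0 := log_nonpos (sum_nonneg fun i hi => (hq i hi).le) hq₁
  have hflip : ∑ i ∈ s, p i * log (q i / p i) = -∑ i ∈ s, p i * log (p i / q i) := by
    rw [← sum_neg_distrib]
    exact sum_congr rfl fun i _ => by rw [← inv_div, log_inv, mul_neg]
  rw [hpq, hflip] at jensen
  linarith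

theorem sum_responsibility_mul_log_div_le {ι : Type*} {s : Finset ι} (hs : s.Nonempty)
    {lam lam' q : ι → ℝ} (hlam : ∀ t ∈ s, 0 < lam t) (hlam' : ∀ t ∈ s, 0 < lam' t)
    (hq : ∀ t ∈ s, 0 < q t) :
    ∑ t ∈ s, lam t * q t / (∑ u ∈ s, lam u * q u) * log (lam' t / lam t) ≤
      log (∑ t ∈ s, lam' t * q t) - log (∑ t ∈ s, lam t * q t) := by
  set S := ∑ u ∈ s, lam u * q u
  have hS : 0 < S := sum_pos (fun t ht => mul_pos (hlam t ht) (hq t ht)) hs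
  have hS' : 0 < ∑ t ∈ s, lam' t * q t :=
    sum_pos (fun t ht => mul_pos (hlam' t ht) (hq t ht)) hs
  have jensen := sum_mul_log_le_log_sum_mul (w := fun t => lam t * q t / S)
    (a := fun t => lam' t / lam t) (fun t ht => (div_pos (mul_pos (hlam t ht) (hq t ht)) hS).le)
    (by rw [← sum_div, div_self hS.ne']) (fun t ht => div_pos (hlam' t ht) (hlam t ht))
  have hmix :
      ∑ t ∈ s, lam t * q t / S * (lam' t / lam t) = (∑ t ∈ s, lam' t * q t) / S := by
    rw [sum_div]
    exact sum_congr rfl fun t ht => by field_simp [(hlam t ht).ne']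
  rwa [hmix, log_div hS'.ne' hS.ne'] at jensen

noncomputable def penalizedLogLik {I T : Type*} [Fintype I] [Fintype T] (q : I → T → ℝ)
    (κ : ℝ) (lam : T → ℝ) : ℝ :=
  ∑ i, log (∑ t, lam t * q i t) + κ * ∑ t, log (lam t)

theorem sum_mul_log_div_le_penalizedLogLik_sub {I T : Type*} [Fintype I] [Fintype T]
    [Nonempty T] {q : I → T → ℝ} (hq : ∀ i t, 0 < q i t) {lam lam' : T → ℝ}
    (hlam : ∀ t, 0 < lam t) (hlam' : ∀ t, 0 < lam' t) (κ : ℝ) {r : I → T → ℝ}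
    (hr : ∀ i t, r i t = lam t * q i t / ∑ t', lam t' * q i t') :
    ∑ t, (∑ i, r i t + κ) * log (lam' t / lam t) ≤
      penalizedLogLik q κ lam' - penalizedLogLik q κ lam := by
  have hobs : ∀ i, ∑ t, r i t * log (lam' t / lam t) ≤
      log (∑ t, lam' t * q i t) - log (∑ t, lam t * q i t) := fun i => by
    simp only [hr]
    exact sum_responsibility_mul_log_div_le univ_nonempty (fun t _ => hlam t)
      (fun t _ => hlam' t) (fun t _ => hq i t)
  have hprior : ∑ t, log (lam' t / lam t) = ∑ t, log (lam' t) - ∑ t, log (lam t) := by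
    rw [← sum_sub_distrib]
    exact sum_congr rfl fun t _ => log_div (hlam' t).ne' (hlam t).ne'
  calc ∑ t, (∑ i, r i t + κ) * log (lam' t / lam t)
      = ∑ i, ∑ t, r i t * log (lam' t / lam t) + κ * ∑ t, log (lam' t / lam t) := by
        simp only [add_mul, sum_add_distrib, sum_mul, mul_sum]
        rw [sum_comm]
    _ ≤ ∑ i, (log (∑ t, lam' t * q i t) - log (∑ t, lam t * q i t)) +
          κ * (∑ t, log (lam' t) - ∑ t, log (lam t)) := by
        rw [hprior]
        gcongr with i
        exact hobs i
    _ = penalizedLogLik q κ lam' - penalizedLogLik q κ lam := by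
        rw [penalizedLogLik, penalizedLogLik, sum_sub_distrib]
        ring

theorem map_em_iteration_monotone_general
    {I T : Type*} [Fintype I] [Fintype T]
    (q : I → T → ℝ) (hq : ∀ i t, 0 < q i t)
    (κ : ℝ) (hκ : 0 < κ)
    (lam : T → ℝ) (hlam : ∀ t, 0 < lam t) (hsum : ∑ t, lam t = 1)
    (r : I → T → ℝ)
    (hr : ∀ i t, r i t = lam t * q i t / ∑ t', lam t' * q i t')
    (lam' : T → ℝ)
    (hlam' : ∀ t, lam' t = ((∑ i, r i t) + κ) /
      ((Fintype.card I : ℝ) + (Fintype.card T : ℝ) * κ)) :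
    ∑ i, Real.log (∑ t, lam' t * q i t) + κ * ∑ t, Real.log (lam' t) ≥
      ∑ i, Real.log (∑ t, lam t * q i t) + κ * ∑ t, Real.log (lam t) := by
  have : Nonempty T :=
    univ_nonempty_iff.mp (nonempty_of_sum_ne_zero (f := lam) (by rw [hsum]; exact one_ne_zero))
  set C : ℝ := (Fintype.card I : ℝ) + (Fintype.card T : ℝ) * κ
  have hC : 0 < C := by positivity
  have hS : ∀ i, 0 < ∑ t, lam t * q i t := fun i =>
    sum_pos (fun t _ => mul_pos (hlam t) (hq i t)) univ_nonempty
  have hr_nonneg : ∀ i t, 0 ≤ r i t := fun i t => by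
    rw [hr]; exact div_nonneg (mul_pos (hlam t) (hq i t)).le (hS i).le
  have hr_sum : ∀ i, ∑ t, r i t = 1 := fun i => by
    simp only [hr, ← sum_div]
    exact div_self (hS i).ne'
  have hcount : ∀ t, ∑ i, r i t + κ = C * lam' t := fun t => by
    rw [hlam', mul_div_cancel₀ _ hC.ne']
  have hlam'_pos : ∀ t, 0 < lam' t := fun t => pos_of_mul_pos_right
    (hcount t ▸ add_pos_of_nonneg_of_pos (sum_nonneg fun i _ => hr_nonneg i t) hκ) hC.le
  have hlam'_sum : ∑ t, lam' t = 1 := by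
    refine mul_left_cancel₀ hC.ne' ?_
    rw [mul_sum, ← sum_congr rfl fun t _ => hcount t, sum_add_distrib, sum_comm]
    simp [hr_sum, C]
  have gain := sum_mul_log_div_le_penalizedLogLik_sub hq hlam hlam'_pos κ hr
  have gibbs := sum_mul_log_div_nonneg (fun t _ => hlam'_pos t) (fun t _ => hlam t)
    hlam'_sum hsum.le
  simp only [hcount, mul_assoc, ← mul_sum] at gain
  change penalizedLogLik q κ lam ≤ penalizedLogLik q κ lam'
  linarith [mul_nonneg hC.le gibbs]

/-- Monotonicity of the MAP-EM iteration for topic mixture weights with a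
symmetric Dirichlet prior with pseudo-count `κ > 0`: the update
`λ' t = (∑ i, r i t + κ) / (M + T κ)` does not decrease the penalized
log-likelihood. -/
theorem map_em_iteration_monotone
    {I T : Type*} [Fintype I] [Nonempty I] [Fintype T] [Nonempty T]
    (q : I → T → ℝ) (hq : ∀ i t, 0 < q i t)
    (κ : ℝ) (hκ : 0 < κ)
    (lam : T → ℝ) (hlam : ∀ t, 0 < lam t) (hsum : ∑ t, lam t = 1)
    (r : I → T → ℝ)
    (hr : ∀ i t, r i t = lam t * q i t / ∑ t', lam t' * q i t')
    (lam' : T → ℝ)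
    (hlam' : ∀ t, lam' t = ((∑ i, r i t) + κ) /
      ((Fintype.card I : ℝ) + (Fintype.card T : ℝ) * κ)) :
    ∑ i, Real.log (∑ t, lam' t * q i t) + κ * ∑ t, Real.log (lam' t) ≥
      ∑ i, Real.log (∑ t, lam t * q i t) + κ * ∑ t, Real.log (lam t) :=
  map_em_iteration_monotone_general q hq κ hκ lam hlam hsum r hr lam' hlam'
end

section
/- With the notation of the confusion-model setting, let s_i(w') ≥ 0 for w' ∈ b_i be the recognizer confidences in bin i, let r_i(w|w') ≥ 0 for w, w' ∈ b_i be posterior weights, and let S_i(t) = Σ_{w'∈b_i} q(w'|t). Define Q(μ) = Σ_{i=1}^M Σ_{w,w'∈b_i} r_i(w|w')·s_i(w')·log( p_c(w'|w)·(Σ_t e^{μ_t} q(w|t)) / (Σ_t e^{μ_t} S_i(t)) ). Then for every δ ∈ ℝ^T, Q(μ+δ) − Q(μ) ≥ Σ_{i=1}^M Σ_{w,w'∈b_i} r_i(w|w')·s_i(w')·[ 1 + (Σ_t e^{μ_t} q(w|t) δ_t)/(Σ_t e^{μ_t} q(w|t)) − (Σ_t e^{μ_t+δ_t} S_i(t))/(Σ_t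 e^{μ_t} S_i(t)) ]. -/
/-!
The channel factor `p_c(w'|w)` cancels in each term of `Q(μ + δ) - Q(μ)`, leaving the change of
`log ∑_t e^{μ_t} q(w|t)` minus the change of `log ∑_t e^{μ_t} S_i(t)`. The first change is at least
the `e^{μ_t} q(w|t)`-weighted mean of `δ` by Jensen's inequality for `exp`; the second is at most
`(∑_t e^{μ_t + δ_t} S_i(t)) / (∑_t e^{μ_t} S_i(t)) - 1` by `log x ≤ x - 1`. Summing with the
nonnegative weights `r_i(w|w') s_i(w')` gives the bound.
-/

open Finset Real

lemma weighted_mean_le_log_sum_mul_exp_sub_log_sum {ι : Type*} (s : Finset ι) (w p : ι → ℝ)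
    (hw : ∀ i ∈ s, 0 ≤ w i) (hw_sum : 0 < ∑ i ∈ s, w i) :
    (∑ i ∈ s, w i * p i) / ∑ i ∈ s, w i ≤
      log (∑ i ∈ s, w i * exp (p i)) - log (∑ i ∈ s, w i) := by
  have jensen : exp (s.centerMass w p) ≤ s.centerMass w (exp ∘ p) :=
    convexOn_exp.map_centerMass_le hw hw_sum fun _ _ => Set.mem_univ _
  simp only [centerMass, smul_eq_mul, Function.comp_apply, inv_mul_eq_div] at jensen
  have hratio_pos := lt_of_lt_of_le (exp_pos _) jensen
  rw [← log_div ((div_pos_iff_of_pos_right hw_sum).1 hratio_pos).ne' hw_sum.ne']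
  exact (le_log_iff_exp_le hratio_pos).2 jensen

lemma one_sub_div_le_log_sub_log {x y : ℝ} (hx : 0 < x) (hy : 0 < y) :
    1 - x / y ≤ log y - log x := by
  have := log_le_sub_one_of_pos (div_pos hx hy)
  rw [log_div hx.ne' hy.ne'] at this
  linarith

lemma log_mul_div_sub_log_mul_div {c a a' b b' : ℝ} (hc : 0 < c) (ha : 0 < a) (ha' : 0 < a')
    (hb : 0 < b) (hb' : 0 < b') :
    log (c * a' / b') - log (c * a / b) = (log a' - log a) - (log b' - log b) := by
  rw [log_div (by positivity) hb'.ne', log_mul hc.ne' ha'.ne', log_div (by positivity) hb.ne',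
    log_mul hc.ne' ha.ne']
  ring

lemma sum_exp_mul_pos {T : Type*} [Fintype T] [Nonempty T] (μ c : T → ℝ) (hc : ∀ t, 0 < c t) :
    0 < ∑ t, exp (μ t) * c t :=
  sum_pos (fun t _ => mul_pos (exp_pos _) (hc t)) univ_nonempty

lemma one_add_mean_sub_ratio_le_log_ratio_change {T : Type*} [Fintype T] [Nonempty T]
    {c : ℝ} (hc : 0 < c) (q S : T → ℝ) (hq : ∀ t, 0 < q t) (hS : ∀ t, 0 < S t) (μ δ : T → ℝ) :
    1 + (∑ t, exp (μ t) * q t * δ t) / (∑ t, exp (μ t) * q t)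
        - (∑ t, exp (μ t + δ t) * S t) / (∑ t, exp (μ t) * S t) ≤
      log (c * (∑ t, exp (μ t + δ t) * q t) / ∑ t, exp (μ t + δ t) * S t) -
        log (c * (∑ t, exp (μ t) * q t) / ∑ t, exp (μ t) * S t) := by
  have hA : 0 < ∑ t, exp (μ t) * q t := sum_exp_mul_pos μ q hq
  have hA' : 0 < ∑ t, exp (μ t + δ t) * q t := sum_exp_mul_pos _ q hq
  have hB : 0 < ∑ t, exp (μ t) * S t := sum_exp_mul_pos μ S hS
  have hB' : 0 < ∑ t, exp (μ t + δ t) * S t := sum_exp_mul_pos _ S hS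
  have hmean := weighted_mean_le_log_sum_mul_exp_sub_log_sum univ (fun t => exp (μ t) * q t) δ
    (fun t _ => (mul_pos (exp_pos _) (hq t)).le) hA
  have hshift : ∑ t, exp (μ t) * q t * exp (δ t) = ∑ t, exp (μ t + δ t) * q t :=
    sum_congr rfl fun t _ => by rw [exp_add]; ring
  rw [hshift] at hmean
  rw [log_mul_div_sub_log_mul_div hc hA hA' hB hB']
  linarith [one_sub_div_le_log_sub_log hB' hB]

/-- `s i w'`, `r i w w'` and `pc v w` stand for `s_i(w')`, `r_i(w|w')` and `p_c(v|w)`. -/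
theorem Q_diff_ge_lower_bound_expected_counts_general
    {V : Type*} {T : Type*} [Fintype T] [Nonempty T]
    (M : ℕ) (b : Fin M → Finset V)
    (pc : V → V → ℝ) (hpc : ∀ v w, 0 < pc v w)
    (q : V → T → ℝ) (hq : ∀ w t, 0 < q w t)
    (s : Fin M → V → ℝ) (hs : ∀ i, ∀ w' ∈ b i, 0 ≤ s i w')
    (r : Fin M → V → V → ℝ) (hr : ∀ i, ∀ w ∈ b i, ∀ w' ∈ b i, 0 ≤ r i w w')
    (μ δ : T → ℝ) :
    (∑ i, ∑ w ∈ b i, ∑ w' ∈ b i, r i w w' * s i w' *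
        Real.log (pc w' w * (∑ t, Real.exp (μ t + δ t) * q w t) /
          (∑ t, Real.exp (μ t + δ t) * ∑ w'' ∈ b i, q w'' t))) -
    (∑ i, ∑ w ∈ b i, ∑ w' ∈ b i, r i w w' * s i w' *
        Real.log (pc w' w * (∑ t, Real.exp (μ t) * q w t) /
          (∑ t, Real.exp (μ t) * ∑ w'' ∈ b i, q w'' t))) ≥
    ∑ i, ∑ w ∈ b i, ∑ w' ∈ b i, r i w w' * s i w' *
      (1 + (∑ t, Real.exp (μ t) * q w t * δ t) / (∑ t, Real.exp (μ t) * q w t)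
         - (∑ t, Real.exp (μ t + δ t) * ∑ w'' ∈ b i, q w'' t) /
             (∑ t, Real.exp (μ t) * ∑ w'' ∈ b i, q w'' t)) := by
  simp only [ge_iff_le, ← sum_sub_distrib, ← mul_sub]
  refine sum_le_sum fun i _ => sum_le_sum fun w hw => sum_le_sum fun w' hw' => ?_
  refine mul_le_mul_of_nonneg_left ?_ (mul_nonneg (hr i w hw w' hw') (hs i w' hw'))
  exact one_add_mean_sub_ratio_le_log_ratio_change (hpc w' w) (q w) _ (hq w)
    (fun t => sum_pos (fun v _ => hq v t) ⟨w, hw⟩) μ δ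

/-- Expected-counts version of the lower bound on the `Q`-difference in the
confusion model: each 1-best term is replaced by a confidence-weighted sum
over the words of the bin.  Here `s i w'` is the recognizer confidence of
`w'` in bin `i`, `r i w w'` is the posterior weight `r_i(w|w')`,
`pc v w = p_c(v|w)`, and `S_i(t) = ∑_{w' ∈ b i} q w' t`. -/
theorem Q_diff_ge_lower_bound_expected_counts
    {V : Type*} [Fintype V] {T : Type*} [Fintype T] [Nonempty T]
    (M : ℕ) (b : Fin M → Finset V) (hb : ∀ i, (b i).Nonempty)
    (pc : V → V → ℝ) (hpc : ∀ v w, 0 < pc v w)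
    (q : V → T → ℝ) (hq : ∀ w t, 0 < q w t)
    (s : Fin M → V → ℝ) (hs : ∀ i, ∀ w' ∈ b i, 0 ≤ s i w')
    (r : Fin M → V → V → ℝ) (hr : ∀ i, ∀ w ∈ b i, ∀ w' ∈ b i, 0 ≤ r i w w')
    (μ δ : T → ℝ) :
    (∑ i, ∑ w ∈ b i, ∑ w' ∈ b i, r i w w' * s i w' *
        Real.log (pc w' w * (∑ t, Real.exp (μ t + δ t) * q w t) /
          (∑ t, Real.exp (μ t + δ t) * ∑ w'' ∈ b i, q w'' t))) -
    (∑ i, ∑ w ∈ b i, ∑ w' ∈ b i, r i w w' * s i w' *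
        Real.log (pc w' w * (∑ t, Real.exp (μ t) * q w t) /
          (∑ t, Real.exp (μ t) * ∑ w'' ∈ b i, q w'' t))) ≥
    ∑ i, ∑ w ∈ b i, ∑ w' ∈ b i, r i w w' * s i w' *
      (1 + (∑ t, Real.exp (μ t) * q w t * δ t) / (∑ t, Real.exp (μ t) * q w t)
         - (∑ t, Real.exp (μ t + δ t) * ∑ w'' ∈ b i, q w'' t) /
             (∑ t, Real.exp (μ t) * ∑ w'' ∈ b i, q w'' t)) :=
  Q_diff_ge_lower_bound_expected_counts_general M b pc hpc q hq s hs r hr μ δ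
end

section
/- With the notation of the confusion-model setting, suppose r_i(w) ≥ 0 with Σ_{w∈b_i} r_i(w) = 1 for every bin i, let κ = β(α−1) with β > 0 and α < 1 (so κ < 0), let λ_t^{(j)} = e^{μ_t}/Σ_{t'} e^{μ_{t'}}, S_i(t) = Σ_{w'∈b_i} q(w'|t), A_t = Σ_i Σ_{w∈b_i} r_i(w)·e^{μ_t} q(w|t)/(Σ_{t'} e^{μ_{t'}} q(w|t')), and B_t = Σ_i S_i(t)/(Σ_{t'} e^{μ_{t'}} S_i(t')). Define g_MAP(δ) = Σ_i Σ_{w∈b_i} r_i(w)·[1 + (Σ_t e^{μ_t} q(w|t) δ_t)/(Σ_t e^{μ_t} q(w|t)) − (Σ_t e^{μ_t+δ_t} S_i(t))/(Σ_t e^{μ_t} S_i(t))] + κ·[Σ_t δ_t − T·Σ_t λ_t^{(j)} δ_t]. If A_t + κ·(1 − T·λ_t^{(j)}) > 0 for every t, then the vector δ* defined by e^{μ_t+δ*_t} = (A_t + κ·(1 − T·λ_t^{(j)}))/B_t is a global maximizer of g_MAP over ℝ^T. -/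
/-!
Because `∑ w ∈ b i, r i w = 1`, the objective separates as
`g_MAP δ = M + ∑ t, (C t * δ t - B t * exp (μ t + δ t))` with `C t = A t + κ (1 - T λ t)`.
Each summand is maximized where `exp (μ t + δ t) = C t / B t`, by `exp y ≥ 1 + y`.
This needs `B t > 0`, i.e. at least one bin: since `∑ t, (1 - T λ t) = 0`, with no bins
all `A t` vanish and the `C t` would sum to `0`, contradicting `C t > 0`.
-/

open Finset Real

theorem mul_sub_mul_exp_le {b c : ℝ} (hb : 0 < b) (hc : 0 < c) (x : ℝ) :
    c * x - b * exp x ≤ c * log (c / b) - c := by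
  have hcb : 0 < c / b := div_pos hc hb
  have h := add_one_le_exp (x - log (c / b))
  rw [exp_sub, exp_log hcb, le_div_iff₀ hcb, mul_div_assoc', div_le_iff₀ hb] at h
  linarith

theorem mul_sub_mul_exp_add_le {b c : ℝ} (hb : 0 < b) (hc : 0 < c) (μ d : ℝ) :
    c * d - b * exp (μ + d) ≤ c * (log (c / b) - μ) - b * exp (μ + (log (c / b) - μ)) := by
  rw [add_sub_cancel, exp_log (div_pos hc hb), mul_div_cancel₀ c hb.ne']
  linarith [mul_sub_mul_exp_le hb hc (μ + d)]

theorem sum_one_sub_card_mul_eq_zero {T : Type*} [Fintype T] (w : T → ℝ) (h : ∑ t, w t = 1) :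
    ∑ t, (1 - (Fintype.card T : ℝ) * w t) = 0 := by
  simp [sum_sub_distrib, ← mul_sum, h]

theorem sum_mul_sum_div_eq_sum_sum_mul {ι T : Type*} [Fintype T] (s : Finset ι) (r : ι → ℝ)
    (f : ι → T → ℝ) (D : ι → ℝ) (x : T → ℝ) :
    ∑ i ∈ s, r i * ((∑ t, f i t * x t) / D i) = ∑ t, (∑ i ∈ s, r i * f i t / D i) * x t := by
  simp_rw [sum_div, mul_sum, sum_mul]
  rw [sum_comm]
  exact sum_congr rfl fun _ _ => sum_congr rfl fun _ _ => by ring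

theorem sum_exp_div_sum_exp {T : Type*} [Fintype T] [Nonempty T] (μ : T → ℝ) :
    ∑ t, exp (μ t) / ∑ t', exp (μ t') = 1 := by
  rw [← sum_div, div_self (sum_pos (fun t _ => exp_pos (μ t)) univ_nonempty).ne']

section ConfusionNetwork

variable {V T : Type*} [Fintype T] {M : ℕ} (b : Fin M → Finset V) (q : V → T → ℝ)
  (r : Fin M → V → ℝ) (μ : T → ℝ)

theorem sum_bins_linear_term_eq (δ : T → ℝ) :
    ∑ i, ∑ w ∈ b i, r i w *
        ((∑ t, exp (μ t) * q w t * δ t) / ∑ t, exp (μ t) * q w t) =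
      ∑ t, (∑ i, ∑ w ∈ b i,
        r i w * (exp (μ t) * q w t) / ∑ t', exp (μ t') * q w t') * δ t := by
  simp_rw [sum_mul_sum_div_eq_sum_sum_mul (b _) (r _) (fun w t => exp (μ t) * q w t)]
  rw [sum_comm]
  simp_rw [sum_mul]

theorem sum_bins_exp_term_eq (hrsum : ∀ i, ∑ w ∈ b i, r i w = 1) (δ : T → ℝ) :
    ∑ i, ∑ w ∈ b i, r i w *
        ((∑ t, exp (μ t + δ t) * ∑ w' ∈ b i, q w' t) /
          ∑ t, exp (μ t) * ∑ w' ∈ b i, q w' t) =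
      ∑ t, (∑ i, (∑ w' ∈ b i, q w' t) /
        ∑ t', exp (μ t') * ∑ w' ∈ b i, q w' t') * exp (μ t + δ t) := by
  simp_rw [← sum_mul, hrsum, one_mul]
  conv_lhs => simp only [sum_div]
  rw [sum_comm]
  refine sum_congr rfl fun t _ => ?_
  rw [sum_mul]
  exact sum_congr rfl fun _ _ => by ring

theorem surrogate_eq_add_sum (hrsum : ∀ i, ∑ w ∈ b i, r i w = 1) (κ n : ℝ) (lamj A B : T → ℝ)
    (hA : ∀ t, A t = ∑ i, ∑ w ∈ b i,
        r i w * (exp (μ t) * q w t) / ∑ t', exp (μ t') * q w t')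
    (hB : ∀ t, B t = ∑ i, (∑ w' ∈ b i, q w' t) /
        ∑ t', exp (μ t') * ∑ w' ∈ b i, q w' t')
    (δ : T → ℝ) :
    (∑ i, ∑ w ∈ b i, r i w *
        (1 + (∑ t, exp (μ t) * q w t * δ t) / (∑ t, exp (μ t) * q w t)
           - (∑ t, exp (μ t + δ t) * ∑ w' ∈ b i, q w' t) /
               (∑ t, exp (μ t) * ∑ w' ∈ b i, q w' t))) +
      κ * (∑ t, δ t - n * ∑ t, lamj t * δ t) =
    M + ∑ t, ((A t + κ * (1 - n * lamj t)) * δ t - B t * exp (μ t + δ t)) := by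
  have hprior : κ * (∑ t, δ t - n * ∑ t, lamj t * δ t) = ∑ t, κ * (1 - n * lamj t) * δ t := by
    simp only [mul_sum, ← sum_sub_distrib]
    exact sum_congr rfl fun _ _ => by ring
  rw [hprior]
  simp only [mul_add, mul_sub, mul_one, sum_add_distrib, sum_sub_distrib]
  rw [sum_bins_linear_term_eq, sum_bins_exp_term_eq b q r μ hrsum]
  simp only [hrsum, ← hA, ← hB, sum_const, card_univ, Fintype.card_fin, nsmul_eq_mul, mul_one]
  simp only [add_mul, sub_mul, sum_add_distrib, sum_sub_distrib]
  ring

theorem sum_bin_mass_div_pos [Nonempty T] (hM : M ≠ 0) (hb : ∀ i, (b i).Nonempty)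
    (hq : ∀ w t, 0 < q w t) (t : T) :
    0 < ∑ i, (∑ w' ∈ b i, q w' t) / ∑ t', exp (μ t') * ∑ w' ∈ b i, q w' t' := by
  have hmass : ∀ i t, 0 < ∑ w' ∈ b i, q w' t := fun i t => sum_pos (fun w _ => hq w t) (hb i)
  have : NeZero M := ⟨hM⟩
  exact sum_pos (fun i _ => div_pos (hmass i t)
    (sum_pos (fun t' _ => mul_pos (exp_pos _) (hmass i t')) univ_nonempty)) univ_nonempty

end ConfusionNetwork

theorem map_update_alpha_lt_one_maximizes_general
    {V : Type*} {T : Type*} [Fintype T] [Nonempty T]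
    (M : ℕ) (b : Fin M → Finset V) (hb : ∀ i, (b i).Nonempty)
    (q : V → T → ℝ) (hq : ∀ w t, 0 < q w t)
    (r : Fin M → V → ℝ)
    (hrsum : ∀ i, ∑ w ∈ b i, r i w = 1)
    (κ : ℝ)
    (μ : T → ℝ)
    (lamj : T → ℝ) (hlamj : ∀ t, lamj t = Real.exp (μ t) / ∑ t', Real.exp (μ t'))
    (A B : T → ℝ)
    (hA : ∀ t, A t = ∑ i, ∑ w ∈ b i,
        r i w * (Real.exp (μ t) * q w t) / ∑ t', Real.exp (μ t') * q w t')
    (hB : ∀ t, B t = ∑ i, (∑ w' ∈ b i, q w' t) /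
        ∑ t', Real.exp (μ t') * ∑ w' ∈ b i, q w' t')
    (hpos : ∀ t, 0 < A t + κ * (1 - (Fintype.card T : ℝ) * lamj t))
    (gMAP : (T → ℝ) → ℝ)
    (hg : ∀ δ : T → ℝ, gMAP δ =
      (∑ i, ∑ w ∈ b i, r i w *
        (1 + (∑ t, Real.exp (μ t) * q w t * δ t) / (∑ t, Real.exp (μ t) * q w t)
           - (∑ t, Real.exp (μ t + δ t) * ∑ w' ∈ b i, q w' t) /
               (∑ t, Real.exp (μ t) * ∑ w' ∈ b i, q w' t))) +
      κ * (∑ t, δ t - (Fintype.card T : ℝ) * ∑ t, lamj t * δ t)) :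
    ∀ δ : T → ℝ, gMAP δ ≤ gMAP (fun t =>
      Real.log ((A t + κ * (1 - (Fintype.card T : ℝ) * lamj t)) / B t) - μ t) := by
  intro δ
  have hlamsum : ∑ t, lamj t = 1 := by simp only [hlamj, sum_exp_div_sum_exp]
  have hM : M ≠ 0 := by
    rintro rfl
    have hsum := sum_pos (fun t _ => hpos t) univ_nonempty
    simp [hA, ← mul_sum, sum_one_sub_card_mul_eq_zero lamj hlamsum] at hsum
  simp only [hg, surrogate_eq_add_sum b q r μ hrsum κ _ lamj A B hA hB]
  gcongr _ + ?_
  refine sum_le_sum fun t _ => ?_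
  exact mul_sub_mul_exp_add_le (hB t ▸ sum_bin_mass_div_pos b q μ hM hb hq t) (hpos t) (μ t) (δ t)

/-- The paper's MAP update equation for `α < 1`: the surrogate objective
`g_MAP`, obtained by adding the linearized Dirichlet prior bound
`κ (∑ δ t - T ∑ λ^{(j)} t * δ t)` (with `κ = β (α - 1) < 0`) to the concave
lower bound on the `Q`-difference, is globally maximized over `ℝ^T` at the
vector `δ*` defined by `e^{μ t + δ* t} = (A t + κ (1 - T λ^{(j)} t)) / B t`. -/
theorem map_update_alpha_lt_one_maximizes
    {V : Type*} [Fintype V] {T : Type*} [Fintype T] [Nonempty T]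
    (M : ℕ) (b : Fin M → Finset V) (hb : ∀ i, (b i).Nonempty)
    (q : V → T → ℝ) (hq : ∀ w t, 0 < q w t)
    (r : Fin M → V → ℝ) (hr : ∀ i, ∀ w ∈ b i, 0 ≤ r i w)
    (hrsum : ∀ i, ∑ w ∈ b i, r i w = 1)
    (β α κ : ℝ) (hβ : 0 < β) (hα : α < 1) (hκ : κ = β * (α - 1))
    (μ : T → ℝ)
    (lamj : T → ℝ) (hlamj : ∀ t, lamj t = Real.exp (μ t) / ∑ t', Real.exp (μ t'))
    (A B : T → ℝ)
    (hA : ∀ t, A t = ∑ i, ∑ w ∈ b i,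
        r i w * (Real.exp (μ t) * q w t) / ∑ t', Real.exp (μ t') * q w t')
    (hB : ∀ t, B t = ∑ i, (∑ w' ∈ b i, q w' t) /
        ∑ t', Real.exp (μ t') * ∑ w' ∈ b i, q w' t')
    (hpos : ∀ t, 0 < A t + κ * (1 - (Fintype.card T : ℝ) * lamj t))
    (gMAP : (T → ℝ) → ℝ)
    (hg : ∀ δ : T → ℝ, gMAP δ =
      (∑ i, ∑ w ∈ b i, r i w *
        (1 + (∑ t, Real.exp (μ t) * q w t * δ t) / (∑ t, Real.exp (μ t) * q w t)
           - (∑ t, Real.exp (μ t + δ t) * ∑ w' ∈ b i, q w' t) /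
               (∑ t, Real.exp (μ t) * ∑ w' ∈ b i, q w' t))) +
      κ * (∑ t, δ t - (Fintype.card T : ℝ) * ∑ t, lamj t * δ t)) :
    ∀ δ : T → ℝ, gMAP δ ≤ gMAP (fun t =>
      Real.log ((A t + κ * (1 - (Fintype.card T : ℝ) * lamj t)) / B t) - μ t) :=
  map_update_alpha_lt_one_maximizes_general M b hb q hq r hrsum κ μ lamj hlamj A B hA hB hpos gMAP
    hg
end
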